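/- Let f : ℝⁿ → ℝ be differentiable with L-Lipschitz-continuous gradient (L > 0), and let φ : ℝⁿ → ℝ be differentiable and bounded below by m, i.e., φ(y) ≥ m for all y. Fix x, d ∈ ℝⁿ, set g = ∇φ(x), and suppose ‖d‖ ≤ c₁‖g‖ and ⟨d, g⟩ ≤ −c₂‖g‖² for constants c₁, c₂ > 0. Let γ ∈ (0,1) and α > 0 satisfy the Armijo condition φ(x + α·d) ≤ φ(x) + γα⟨d, g⟩. Then (f(x + α·d) − f(x))/α ≤ ⟨∇f(x), d⟩ + (L c₁²/(2γc₂)) (φ(x) − m). -/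

import Mathlib

/-!
By the descent lemma for `f`, the difference quotient is at most
`⟪∇f x, d⟫ + (L / 2) α ‖d‖²`. The Armijo decrease is bounded by `φ x - m`, and with the angle
condition on `d` this gives `γ α c₂ ‖g‖² ≤ φ x - m`; the norm condition then turns it into
`α ‖d‖² ≤ c₁² (φ x - m) / (γ c₂)`.
-/

open Set

section Descent

variable {E : Type*} [NormedAddCommGroup E] [InnerProductSpace ℝ E] [CompleteSpace E]
  {f : E → ℝ} {L : ℝ}

theorem hasDerivAt_comp_add_smul (hf : Differentiable ℝ f) (x v : E) (t : ℝ) :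
    HasDerivAt (fun s : ℝ => f (x + s • v)) (inner ℝ (gradient f (x + t • v)) v) t := by
  have hline : HasDerivAt (fun s : ℝ => x + s • v) v t := by
    simpa using ((hasDerivAt_id t).smul_const v).const_add x
  exact ((hf _).hasGradientAt.hasFDerivAt.comp_hasDerivAt t hline).congr_deriv (by simp)

theorem inner_gradient_add_smul_sub_le
    (hflip : ∀ y z : E, ‖gradient f y - gradient f z‖ ≤ L * ‖y - z‖)
    (x v : E) {t : ℝ} (ht : 0 ≤ t) :
    inner ℝ (gradient f (x + t • v)) v - inner ℝ (gradient f x) v ≤ L * t * ‖v‖ ^ 2 :=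
  calc inner ℝ (gradient f (x + t • v)) v - inner ℝ (gradient f x) v
      = inner ℝ (gradient f (x + t • v) - gradient f x) v := (inner_sub_left ..).symm
    _ ≤ ‖gradient f (x + t • v) - gradient f x‖ * ‖v‖ := real_inner_le_norm ..
    _ ≤ L * ‖x + t • v - x‖ * ‖v‖ := by gcongr; exact hflip ..
    _ = L * t * ‖v‖ ^ 2 := by
      rw [add_sub_cancel_left, norm_smul, Real.norm_of_nonneg ht]; ring

theorem le_add_inner_gradient_add_sq_norm (hf : Differentiable ℝ f)
    (hflip : ∀ y z : E, ‖gradient f y - gradient f z‖ ≤ L * ‖y - z‖) (x v : E) :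
    f (x + v) ≤ f x + inner ℝ (gradient f x) v + L / 2 * ‖v‖ ^ 2 := by
  have hderiv (t : ℝ) : HasDerivAt (fun s : ℝ => f (x + s • v) - s * inner ℝ (gradient f x) v)
      (inner ℝ (gradient f (x + t • v)) v - inner ℝ (gradient f x) v) t :=
    (hasDerivAt_comp_add_smul hf x v t).sub (hasDerivAt_mul_const _)
  have hbound (t : ℝ) : HasDerivAt (fun s : ℝ => f x + L / 2 * ‖v‖ ^ 2 * s ^ 2)
      (L * t * ‖v‖ ^ 2) t :=
    (((hasDerivAt_pow 2 t).const_mul _).const_add _).congr_deriv (by push_cast; ring)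
  have key := image_le_of_deriv_right_le_deriv_boundary
    (fun t _ => (hderiv t).continuousAt.continuousWithinAt)
    (fun t _ => (hderiv t).hasDerivWithinAt) (by simp)
    (fun t _ => (hbound t).continuousAt.continuousWithinAt)
    (fun t _ => (hbound t).hasDerivWithinAt)
    (fun t ht => inner_gradient_add_smul_sub_le hflip x v ht.1)
    (right_mem_Icc.2 zero_le_one)
  simp only [one_smul, one_mul, one_pow, mul_one] at key
  linarith

end Descent

section Armijo

variable {E : Type*} [NormedAddCommGroup E] [InnerProductSpace ℝ E]
  {φ : E → ℝ} {m γ α c₁ c₂ : ℝ} {x d g : E}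

theorem mul_sq_norm_le_sub_of_armijo (hm : ∀ y, m ≤ φ y)
    (hd2 : inner ℝ d g ≤ -c₂ * ‖g‖ ^ 2) (hγ : 0 ≤ γ) (hα : 0 ≤ α)
    (harmijo : φ (x + α • d) ≤ φ x + γ * α * inner ℝ d g) :
    γ * α * c₂ * ‖g‖ ^ 2 ≤ φ x - m := by
  have := mul_le_mul_of_nonneg_left hd2 (mul_nonneg hγ hα)
  linarith [hm (x + α • d)]

theorem mul_sq_norm_le_div_mul_of_armijo (hm : ∀ y, m ≤ φ y)
    (hd1 : ‖d‖ ≤ c₁ * ‖g‖) (hd2 : inner ℝ d g ≤ -c₂ * ‖g‖ ^ 2)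
    (hγ : 0 < γ) (hc₂ : 0 < c₂) (hα : 0 ≤ α)
    (harmijo : φ (x + α • d) ≤ φ x + γ * α * inner ℝ d g) :
    α * ‖d‖ ^ 2 ≤ c₁ ^ 2 / (γ * c₂) * (φ x - m) :=
  calc α * ‖d‖ ^ 2 ≤ α * (c₁ * ‖g‖) ^ 2 := by gcongr
    _ = c₁ ^ 2 / (γ * c₂) * (γ * α * c₂ * ‖g‖ ^ 2) := by field_simp
    _ ≤ c₁ ^ 2 / (γ * c₂) * (φ x - m) := by
      gcongr; exact mul_sq_norm_le_sub_of_armijo hm hd2 hγ.le hα harmijo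

end Armijo

theorem descent_estimate_from_armijo_general
    (n : ℕ) (f φ : EuclideanSpace ℝ (Fin n) → ℝ) (L : ℝ) (hL : 0 < L)
    (hfdiff : Differentiable ℝ f)
    (hflip : ∀ y z : EuclideanSpace ℝ (Fin n), ‖gradient f y - gradient f z‖ ≤ L * ‖y - z‖)
    (m : ℝ) (hm : ∀ y, m ≤ φ y)
    (x d : EuclideanSpace ℝ (Fin n)) (c₁ c₂ : ℝ) (hc₂ : 0 < c₂)
    (hd1 : ‖d‖ ≤ c₁ * ‖gradient φ x‖)
    (hd2 : (inner ℝ d (gradient φ x) : ℝ) ≤ -c₂ * ‖gradient φ x‖ ^ 2)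
    (γ : ℝ) (hγ : γ ∈ Set.Ioo (0 : ℝ) 1)
    (α : ℝ) (hα : 0 < α)
    (harmijo : φ (x + α • d) ≤ φ x + γ * α * (inner ℝ d (gradient φ x) : ℝ)) :
    (f (x + α • d) - f x) / α ≤
      (inner ℝ (gradient f x) d : ℝ) + (L * c₁ ^ 2 / (2 * γ * c₂)) * (φ x - m) := by
  have hstep := mul_sq_norm_le_div_mul_of_armijo hm hd1 hd2 hγ.1 hc₂ hα.le harmijo
  have hdesc := le_add_inner_gradient_add_sq_norm hfdiff hflip x (α • d)
  rw [inner_smul_right, norm_smul, Real.norm_of_nonneg hα.le] at hdesc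
  rw [div_le_iff₀ hα]
  calc f (x + α • d) - f x ≤ α * (inner ℝ (gradient f x) d + L / 2 * (α * ‖d‖ ^ 2)) := by
        linarith
    _ ≤ α * (inner ℝ (gradient f x) d + L / 2 * (c₁ ^ 2 / (γ * c₂) * (φ x - m))) := by
        gcongr
    _ = _ := by field_simp

/-- Per-iteration descent estimate on the true objective from the Armijo
condition on the (stochastic) objective φ. -/
theorem descent_estimate_from_armijo
    (n : ℕ) (f φ : EuclideanSpace ℝ (Fin n) → ℝ) (L : ℝ) (hL : 0 < L)
    (hfdiff : Differentiable ℝ f)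
    (hflip : ∀ y z : EuclideanSpace ℝ (Fin n), ‖gradient f y - gradient f z‖ ≤ L * ‖y - z‖)
    (hφdiff : Differentiable ℝ φ)
    (m : ℝ) (hm : ∀ y, m ≤ φ y)
    (x d : EuclideanSpace ℝ (Fin n)) (c₁ c₂ : ℝ) (hc₁ : 0 < c₁) (hc₂ : 0 < c₂)
    (hd1 : ‖d‖ ≤ c₁ * ‖gradient φ x‖)
    (hd2 : (inner ℝ d (gradient φ x) : ℝ) ≤ -c₂ * ‖gradient φ x‖ ^ 2)
    (γ : ℝ) (hγ : γ ∈ Set.Ioo (0 : ℝ) 1)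
    (α : ℝ) (hα : 0 < α)
    (harmijo : φ (x + α • d) ≤ φ x + γ * α * (inner ℝ d (gradient φ x) : ℝ)) :
    (f (x + α • d) - f x) / α ≤
      (inner ℝ (gradient f x) d : ℝ) + (L * c₁ ^ 2 / (2 * γ * c₂)) * (φ x - m) :=
  descent_estimate_from_armijo_general n f φ L hL hfdiff hflip m hm x d c₁ c₂ hc₂ hd1 hd2 γ hγ α hα
    harmijo
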